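/- Let γ ∈ [0, 2], β ∈ (0, 3 − γ], set α = (4 − γ)/(3 − γ − β) when β < 3 − γ (so α > 1), and let V(x) = |x|^α on ℝ^d. Let q : ℝ^d → ℝ^d. Then for every x ≠ 0, Δ^γ_∞V(x) + (q(x)·∇V(x))|∇V(x)|^{2−γ} = α^{3−γ}|x|^{3α−4−γ(α−1)}((α−1) + q(x)·x) ≤ |x|^{αβ} α^{3−γ}((α−1) + (q(x)·x)₊). Consequently, if c : ℝ^d → ℝ satisfies −c(x) ≥ α^{3−γ}((α−1) + (q(x)·x)₊), then Δ^γ_∞V(x) + (q(x)·∇V(x))|∇V(x)|^{2−γ} + c(x) V(x)^β ≤ 0 for all x ≠ 0. -/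

import Mathlib

/-!
Away from the origin `∇|x|^p = p|x|^(p-2) x`, and differentiating once more along this radial
vector gives `D²V ∇V = p²(p-1)|x|^(2p-4) x`. Hence both the normalized infinity Laplacian and the
drift term are `p^(3-γ)|x|^(3p-4-γ(p-1))` times `p - 1` and `q·x` respectively; the choice of `α`
makes that exponent `αβ`, the homogeneity of `V^β`, and what remains is `q·x ≤ (q·x)₊` and the
sign condition on `c`.
-/

open scoped RealInnerProductSpace
open Real Filter

noncomputable def infLap {d : ℕ} (f : EuclideanSpace ℝ (Fin d) → ℝ)
    (x : EuclideanSpace ℝ (Fin d)) : ℝ :=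
  ⟪gradient f x, fderiv ℝ (gradient f) x (gradient f x)⟫

noncomputable def infLapG {d : ℕ} (γ : ℝ) (f : EuclideanSpace ℝ (Fin d) → ℝ)
    (x : EuclideanSpace ℝ (Fin d)) : ℝ :=
  ‖gradient f x‖ ^ (-γ) * infLap f x

section NormRpow

variable {E : Type*} [NormedAddCommGroup E] [InnerProductSpace ℝ E]

theorem hasFDerivAt_norm_rpow_of_ne_zero {x : E} (hx : x ≠ 0) (p : ℝ) :
    HasFDerivAt (fun y : E ↦ ‖y‖ ^ p) ((p * ‖x‖ ^ (p - 2)) • innerSL ℝ x) x := by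
  apply HasStrictFDerivAt.hasFDerivAt
  convert! (hasStrictFDerivAt_norm_sq x).rpow_const (p := p / 2) (by simp [hx]) using 0
  simp_rw [← Real.rpow_natCast_mul (norm_nonneg _), ← Nat.cast_smul_eq_nsmul ℝ, smul_smul]
  ring_nf

variable [CompleteSpace E]

theorem hasGradientAt_norm_rpow_of_ne_zero {x : E} (hx : x ≠ 0) (p : ℝ) :
    HasGradientAt (fun y : E ↦ ‖y‖ ^ p) ((p * ‖x‖ ^ (p - 2)) • x) x := by
  rw [hasGradientAt_iff_hasFDerivAt, map_smul]
  exact hasFDerivAt_norm_rpow_of_ne_zero hx p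

theorem gradient_norm_rpow_of_ne_zero {x : E} (hx : x ≠ 0) (p : ℝ) :
    gradient (fun y : E ↦ ‖y‖ ^ p) x = (p * ‖x‖ ^ (p - 2)) • x :=
  (hasGradientAt_norm_rpow_of_ne_zero hx p).gradient

theorem norm_gradient_norm_rpow_of_ne_zero {x : E} (hx : x ≠ 0) (p : ℝ) :
    ‖gradient (fun y : E ↦ ‖y‖ ^ p) x‖ = |p| * ‖x‖ ^ (p - 1) := by
  have hr : 0 < ‖x‖ := norm_pos_iff.mpr hx
  rw [gradient_norm_rpow_of_ne_zero hx, norm_smul, norm_mul, Real.norm_eq_abs,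
    Real.norm_of_nonneg (by positivity), mul_assoc, ← Real.rpow_add_one hr.ne']
  ring_nf

theorem fderiv_gradient_norm_rpow_apply {x : E} (hx : x ≠ 0) (p : ℝ) (v : E) :
    fderiv ℝ (gradient fun y : E ↦ ‖y‖ ^ p) x v
      = (p * ‖x‖ ^ (p - 2)) • v + (p * (p - 2) * ‖x‖ ^ (p - 4) * ⟪x, v⟫) • x := by
  have hgrad : gradient (fun y : E ↦ ‖y‖ ^ p) =ᶠ[nhds x] fun y ↦ (p * ‖y‖ ^ (p - 2)) • y := by
    filter_upwards [isOpen_compl_singleton.mem_nhds hx] with y hy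
    exact gradient_norm_rpow_of_ne_zero hy p
  have hderiv : HasFDerivAt (fun y : E ↦ (p * ‖y‖ ^ (p - 2)) • y) _ x :=
    ((hasFDerivAt_norm_rpow_of_ne_zero hx (p - 2)).const_mul p).smul (hasFDerivAt_id x)
  rw [hgrad.fderiv_eq, hderiv.fderiv]
  simp only [add_apply, smul_apply,
    ContinuousLinearMap.id_apply, ContinuousLinearMap.smulRight_apply, innerSL_apply_apply,
    smul_eq_mul]
  ring_nf

theorem inner_gradient_fderiv_gradient_norm_rpow {x : E} (hx : x ≠ 0) (p : ℝ) :
    ⟪gradient (fun y : E ↦ ‖y‖ ^ p) x,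
      fderiv ℝ (gradient fun y : E ↦ ‖y‖ ^ p) x (gradient (fun y : E ↦ ‖y‖ ^ p) x)⟫
      = p ^ 3 * (p - 1) * ‖x‖ ^ (3 * p - 4) := by
  have hr : 0 < ‖x‖ := norm_pos_iff.mpr hx
  rw [fderiv_gradient_norm_rpow_apply hx, gradient_norm_rpow_of_ne_zero hx]
  simp only [inner_add_right, real_inner_smul_left, real_inner_smul_right]
  rw [real_inner_self_eq_norm_sq]
  have h4 : ‖x‖ ^ (p - 4) * ‖x‖ ^ 2 = ‖x‖ ^ (p - 2) := by
    rw [← rpow_natCast, ← rpow_add hr]; norm_num; ring_nf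
  have h3 : ‖x‖ ^ (3 * p - 4) = ‖x‖ ^ (p - 2) * ‖x‖ ^ (p - 2) * ‖x‖ ^ (p - 2) * ‖x‖ ^ 2 := by
    rw [← rpow_natCast, ← rpow_add hr, ← rpow_add hr, ← rpow_add hr]; norm_num; ring_nf
  rw [h3]
  linear_combination p ^ 3 * (p - 2) * ‖x‖ ^ (p - 2) * ‖x‖ ^ (p - 2) * ‖x‖ ^ 2 * h4

theorem inner_gradient_norm_rpow_mul_norm_gradient_rpow {x : E} (hx : x ≠ 0) {p : ℝ}
    (hp : 0 < p) (γ : ℝ) (v : E) :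
    ⟪v, gradient (fun y : E ↦ ‖y‖ ^ p) x⟫ * ‖gradient (fun y : E ↦ ‖y‖ ^ p) x‖ ^ (2 - γ)
      = p ^ (3 - γ) * ‖x‖ ^ (3 * p - 4 - γ * (p - 1)) * ⟪v, x⟫ := by
  have hr : 0 < ‖x‖ := norm_pos_iff.mpr hx
  rw [norm_gradient_norm_rpow_of_ne_zero hx, gradient_norm_rpow_of_ne_zero hx,
    real_inner_smul_right, abs_of_pos hp, mul_rpow hp.le (by positivity), ← rpow_mul hr.le,
    show 3 - γ = 1 + (2 - γ) by ring, rpow_add hp, rpow_one,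
    show 3 * p - 4 - γ * (p - 1) = (p - 2) + (p - 1) * (2 - γ) by ring, rpow_add hr]
  ring

end NormRpow

theorem infLapG_norm_rpow {d : ℕ} {x : EuclideanSpace ℝ (Fin d)} (hx : x ≠ 0) {p : ℝ}
    (hp : 0 < p) (γ : ℝ) :
    infLapG γ (fun y ↦ ‖y‖ ^ p) x = p ^ (3 - γ) * ‖x‖ ^ (3 * p - 4 - γ * (p - 1)) * (p - 1) := by
  have hr : 0 < ‖x‖ := norm_pos_iff.mpr hx
  rw [infLapG, infLap, inner_gradient_fderiv_gradient_norm_rpow hx,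
    norm_gradient_norm_rpow_of_ne_zero hx, abs_of_pos hp, mul_rpow hp.le (by positivity),
    ← rpow_mul hr.le, show 3 - γ = -γ + (3 : ℕ) by push_cast; ring, rpow_add hp, rpow_natCast,
    show 3 * p - 4 - γ * (p - 1) = (p - 1) * -γ + (3 * p - 4) by ring, rpow_add hr]
  ring

theorem stmt3_general (d : ℕ) (γ β α : ℝ) (hβ1 : 0 < β)
    (hβ2 : β < 3 - γ) (hα : α = (4 - γ) / (3 - γ - β))
    (q : EuclideanSpace ℝ (Fin d) → EuclideanSpace ℝ (Fin d))
    (c : EuclideanSpace ℝ (Fin d) → ℝ)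
    (V : EuclideanSpace ℝ (Fin d) → ℝ) (hV : ∀ x, V x = ‖x‖ ^ α) :
    ∀ x : EuclideanSpace ℝ (Fin d), x ≠ 0 →
      (infLapG γ V x + ⟪q x, gradient V x⟫ * ‖gradient V x‖ ^ (2 - γ)
        = α ^ (3 - γ) * ‖x‖ ^ (3 * α - 4 - γ * (α - 1)) * ((α - 1) + ⟪q x, x⟫))
      ∧ (infLapG γ V x + ⟪q x, gradient V x⟫ * ‖gradient V x‖ ^ (2 - γ)
          ≤ ‖x‖ ^ (α * β) * (α ^ (3 - γ) * ((α - 1) + max (⟪q x, x⟫) 0)))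
      ∧ (α ^ (3 - γ) * ((α - 1) + max (⟪q x, x⟫) 0) ≤ -(c x) →
          infLapG γ V x + ⟪q x, gradient V x⟫ * ‖gradient V x‖ ^ (2 - γ)
            + c x * (V x) ^ β ≤ 0) := by
  intro x hx
  obtain rfl : V = fun y ↦ ‖y‖ ^ α := funext hV
  have hden : 0 < 3 - γ - β := by linarith
  have hα1 : 1 < α := by rw [hα, lt_div_iff₀ hden]; linarith
  have hexp : 3 * α - 4 - γ * (α - 1) = α * β := by rw [hα]; field_simp; ring
  have key : infLapG γ (fun y ↦ ‖y‖ ^ α) x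
      + ⟪q x, gradient (fun y ↦ ‖y‖ ^ α) x⟫ * ‖gradient (fun y ↦ ‖y‖ ^ α) x‖ ^ (2 - γ)
      = α ^ (3 - γ) * ‖x‖ ^ (3 * α - 4 - γ * (α - 1)) * ((α - 1) + ⟪q x, x⟫) := by
    rw [infLapG_norm_rpow hx (by linarith), inner_gradient_norm_rpow_mul_norm_gradient_rpow hx
      (by linarith)]
    ring
  have bound : infLapG γ (fun y ↦ ‖y‖ ^ α) x
      + ⟪q x, gradient (fun y ↦ ‖y‖ ^ α) x⟫ * ‖gradient (fun y ↦ ‖y‖ ^ α) x‖ ^ (2 - γ)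
      ≤ ‖x‖ ^ (α * β) * (α ^ (3 - γ) * ((α - 1) + max ⟪q x, x⟫ 0)) := by
    rw [key, hexp, mul_comm (α ^ _), mul_assoc]
    gcongr
    exact le_max_left _ _
  refine ⟨key, bound, fun hc ↦ ?_⟩
  rw [← rpow_mul (norm_nonneg x)]
  nlinarith [rpow_nonneg (norm_nonneg x) (α * β)]

theorem stmt3 (d : ℕ) (γ β α : ℝ) (hγ : γ ∈ Set.Icc (0 : ℝ) 2) (hβ1 : 0 < β)
    (hβ2 : β < 3 - γ) (hα : α = (4 - γ) / (3 - γ - β))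
    (q : EuclideanSpace ℝ (Fin d) → EuclideanSpace ℝ (Fin d))
    (c : EuclideanSpace ℝ (Fin d) → ℝ)
    (V : EuclideanSpace ℝ (Fin d) → ℝ) (hV : ∀ x, V x = ‖x‖ ^ α) :
    ∀ x : EuclideanSpace ℝ (Fin d), x ≠ 0 →
      (infLapG γ V x + ⟪q x, gradient V x⟫ * ‖gradient V x‖ ^ (2 - γ)
        = α ^ (3 - γ) * ‖x‖ ^ (3 * α - 4 - γ * (α - 1)) * ((α - 1) + ⟪q x, x⟫))
      ∧ (infLapG γ V x + ⟪q x, gradient V x⟫ * ‖gradient V x‖ ^ (2 - γ)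
          ≤ ‖x‖ ^ (α * β) * (α ^ (3 - γ) * ((α - 1) + max (⟪q x, x⟫) 0)))
      ∧ (α ^ (3 - γ) * ((α - 1) + max (⟪q x, x⟫) 0) ≤ -(c x) →
          infLapG γ V x + ⟪q x, gradient V x⟫ * ‖gradient V x‖ ^ (2 - γ)
            + c x * (V x) ^ β ≤ 0) :=
  stmt3_general d γ β α hβ1 hβ2 hα q c V hV
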